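/- Let K₀ be a circled compact subset of the unit sphere in ℂ^{n+1} (i.e., e^{iθ}z ∈ K₀ for all z ∈ K₀, θ ∈ ℝ). Then the polynomially convex hull of K₀ equals its homogeneous polynomial hull: {x : |P(x)| ≤ sup_{K₀}|P| for all polynomials P} = {x : |P(x)| ≤ sup_{K₀}|P| for all homogeneous polynomials P}. -/

import Mathlib

open MvPolynomial

lemma eval_mul_homog {σ : Type*} {m : ℕ} {P : MvPolynomial σ ℂ} (hP : P.IsHomogeneous m)
    (c : ℂ) (z : σ → ℂ) :
    eval (fun i => c * z i) P = c ^ m * eval z P := by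
  rw [eval_eq, eval_eq, Finset.mul_sum]
  refine Finset.sum_congr rfl fun d hd => ?_
  have hdeg : ∑ i ∈ d.support, d i = m := by
    have := hP (mem_support_iff.mp hd)
    simpa [Finsupp.weight_apply, Finsupp.degree, Finsupp.sum] using this
  calc P.coeff d * ∏ i ∈ d.support, (c * z i) ^ d i
      = P.coeff d * ((∏ i ∈ d.support, c ^ d i) * ∏ i ∈ d.support, z i ^ d i) := by
        rw [← Finset.prod_mul_distrib]; simp [mul_pow]
    _ = c ^ m * (P.coeff d * ∏ i ∈ d.support, z i ^ d i) := by
        rw [Finset.prod_pow_eq_pow_sum, hdeg]; ring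

lemma eval_mul_eq_sum {σ : Type*} (P : MvPolynomial σ ℂ) (c : ℂ) (z : σ → ℂ) {N : ℕ}
    (hN : P.totalDegree < N) :
    eval (fun i => c * z i) P
      = ∑ m ∈ Finset.range N, c ^ m * eval z (homogeneousComponent m P) := by
  calc eval (fun i => c * z i) P
      = eval (fun i => c * z i)
          (∑ m ∈ Finset.range (P.totalDegree + 1), homogeneousComponent m P) := by
        rw [sum_homogeneousComponent]
    _ = ∑ m ∈ Finset.range (P.totalDegree + 1), c ^ m * eval z (homogeneousComponent m P) := by
        rw [map_sum]
        exact Finset.sum_congr rfl fun m _ =>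
          eval_mul_homog (homogeneousComponent_isHomogeneous m P) c z
    _ = ∑ m ∈ Finset.range N, c ^ m * eval z (homogeneousComponent m P) := by
        refine Finset.sum_subset (Finset.range_subset_range.2 hN) fun m _ hm => ?_
        rw [homogeneousComponent_eq_zero]
        · simp
        · simp only [Finset.mem_range, not_lt] at hm; omega

lemma key_identity {σ : Type*} (P : MvPolynomial σ ℂ) (z : σ → ℂ) {j N : ℕ}
    (hD : P.totalDegree < N) (hj : j < N) :
    (N : ℂ) * eval z (homogeneousComponent j P)
      = ∑ k ∈ Finset.range N,
          eval (fun i => Complex.exp (2 * Real.pi * Complex.I / N) ^ k * z i) P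
            * (Complex.exp (2 * Real.pi * Complex.I / N) ^ (k * j))⁻¹ := by
  have hN0 : N ≠ 0 := by omega
  set ω := Complex.exp (2 * Real.pi * Complex.I / N) with hωdef
  have hprim : IsPrimitiveRoot ω N := Complex.isPrimitiveRoot_exp N hN0
  have hω0 : ω ≠ 0 := Complex.exp_ne_zero _
  have hterm : ∀ m k : ℕ, ((ω ^ k) ^ m * eval z (homogeneousComponent m P)) * (ω ^ (k * j))⁻¹
      = eval z (homogeneousComponent m P) * (ω ^ m * (ω ^ j)⁻¹) ^ k := by
    intro m k
    rw [mul_pow, inv_pow, ← pow_mul, ← pow_mul, ← pow_mul]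
    ring_nf
  have hgeom : ∀ m ∈ Finset.range N,
      ∑ k ∈ Finset.range N, (ω ^ m * (ω ^ j)⁻¹) ^ k = if m = j then (N : ℂ) else 0 := by
    intro m hm
    by_cases h : m = j
    · subst h
      rw [mul_inv_cancel₀ (pow_ne_zero _ hω0)]
      simp
    · have hζ1 : ω ^ m * (ω ^ j)⁻¹ ≠ 1 := by
        intro hcon
        refine h (hprim.pow_inj (Finset.mem_range.1 hm) hj ?_)
        rw [← div_eq_mul_inv, div_eq_one_iff_eq (pow_ne_zero _ hω0)] at hcon
        exact hcon
      have hζN : (ω ^ m * (ω ^ j)⁻¹) ^ N = 1 := by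
        rw [mul_pow, inv_pow, ← pow_mul, ← pow_mul, mul_comm m N, mul_comm j N,
          pow_mul, pow_mul, hprim.pow_eq_one, one_pow, one_pow, inv_one, mul_one]
      rw [geom_sum_eq hζ1, hζN]
      simp [h]
  calc (N : ℂ) * eval z (homogeneousComponent j P)
      = ∑ m ∈ Finset.range N, eval z (homogeneousComponent m P)
          * (if m = j then (N : ℂ) else 0) := by
        rw [Finset.sum_eq_single j (fun m _ hmj => by simp [hmj])
          (fun h => absurd (Finset.mem_range.2 hj) h)]
        simp [mul_comm]
    _ = ∑ m ∈ Finset.range N, eval z (homogeneousComponent m P)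
          * ∑ k ∈ Finset.range N, (ω ^ m * (ω ^ j)⁻¹) ^ k :=
        Finset.sum_congr rfl fun m hm => by rw [hgeom m hm]
    _ = ∑ m ∈ Finset.range N, ∑ k ∈ Finset.range N,
          ((ω ^ k) ^ m * eval z (homogeneousComponent m P)) * (ω ^ (k * j))⁻¹ := by
        refine Finset.sum_congr rfl fun m _ => ?_
        rw [Finset.mul_sum]
        exact Finset.sum_congr rfl fun k _ => (hterm m k).symm
    _ = ∑ k ∈ Finset.range N, eval (fun i => ω ^ k * z i) P * (ω ^ (k * j))⁻¹ := by
        rw [Finset.sum_comm]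
        refine Finset.sum_congr rfl fun k _ => ?_
        rw [eval_mul_eq_sum P _ z hD, Finset.sum_mul]
open MvPolynomial

/-- Let `K₀` be a circled compact subset of the unit sphere in `ℂ^{n+1}`
(i.e. `e^{iθ}z ∈ K₀` for all `z ∈ K₀`, `θ ∈ ℝ`).  Then the polynomially convex hull
of `K₀` equals its homogeneous polynomial hull. -/
theorem circled_polynomial_hull_eq_homogeneous_hull (n : ℕ)
    (K₀ : Set (Fin (n + 1) → ℂ)) (hKc : IsCompact K₀)
    (hsph : ∀ z ∈ K₀, ∑ i, ‖z i‖ ^ 2 = 1)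
    (hcirc : ∀ z ∈ K₀, ∀ θ : ℝ, (fun i => Complex.exp (θ * Complex.I) * z i) ∈ K₀) :
    {x : Fin (n + 1) → ℂ | ∀ P : MvPolynomial (Fin (n + 1)) ℂ,
        ‖eval x P‖ ≤ sSup ((fun y => ‖eval y P‖) '' K₀)} =
    {x : Fin (n + 1) → ℂ | ∀ (d : ℕ) (P : MvPolynomial (Fin (n + 1)) ℂ),
        P.IsHomogeneous d →
        ‖eval x P‖ ≤ sSup ((fun y => ‖eval y P‖) '' K₀)} := by
  set MQ : MvPolynomial (Fin (n + 1)) ℂ → ℝ :=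
    fun Q => sSup ((fun y => ‖eval y Q‖) '' K₀) with hMQ
  have hle : ∀ (Q : MvPolynomial (Fin (n + 1)) ℂ) z, z ∈ K₀ →
      ‖eval z Q‖ ≤ MQ Q := by
    intro Q z hz
    refine le_csSup (hKc.bddAbove_image (Continuous.continuousOn ?_)) ⟨z, hz, rfl⟩
    exact continuous_norm.comp (MvPolynomial.continuous_eval Q)
  have Mnn : ∀ Q, 0 ≤ MQ Q := by
    intro Q
    rcases Set.eq_empty_or_nonempty K₀ with h | ⟨z, hz⟩
    · simp [hMQ, h, Real.sSup_empty]
    · exact (norm_nonneg _).trans (hle Q z hz)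
  -- the core Cauchy estimate: sup of homogeneous component is ≤ sup of Q
  have hcomp : ∀ Q j, MQ (homogeneousComponent j Q) ≤ MQ Q := by
    intro Q j
    refine Real.sSup_le ?_ (Mnn Q)
    rintro r ⟨z, hz, rfl⟩
    set N : ℕ := max (Q.totalDegree + 1) (j + 1) with hNdef
    have hD : Q.totalDegree < N := by omega
    have hj : j < N := by omega
    have hN0 : (0:ℝ) < N := by positivity
    have hkey := key_identity Q z hD hj
    set ω : ℂ := Complex.exp (2 * Real.pi * Complex.I / N) with hωdef
    have hωk : ∀ k : ℕ, ω ^ k = Complex.exp (((k * (2 * Real.pi / N) : ℝ) : ℂ) * Complex.I) := by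
      intro k
      rw [hωdef, ← Complex.exp_nat_mul]
      congr 1
      push_cast
      ring
    have habsω : ∀ k : ℕ, ‖ω ^ k‖ = 1 := by
      intro k
      rw [hωk k, Complex.norm_exp_ofReal_mul_I]
    have hmem : ∀ k : ℕ, (fun i => ω ^ k * z i) ∈ K₀ := by
      intro k
      have h := hcirc z hz ((k : ℝ) * (2 * Real.pi / N))
      rw [hωk k]
      exact h
    have hsum : (N : ℝ) * ‖eval z (homogeneousComponent j Q)‖ ≤ (N : ℝ) * MQ Q := by
      calc (N : ℝ) * ‖eval z (homogeneousComponent j Q)‖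
          = ‖(N : ℂ) * eval z (homogeneousComponent j Q)‖ := by
            rw [norm_mul]; simp
        _ = ‖∑ k ∈ Finset.range N,
              eval (fun i => ω ^ k * z i) Q * (ω ^ (k * j))⁻¹‖ := by rw [hkey]
        _ ≤ ∑ k ∈ Finset.range N,
              ‖eval (fun i => ω ^ k * z i) Q * (ω ^ (k * j))⁻¹‖ := by
            exact norm_sum_le _ _
        _ ≤ ∑ k ∈ Finset.range N, MQ Q := by
            refine Finset.sum_le_sum fun k _ => ?_
            rw [norm_mul, norm_inv, habsω, inv_one, mul_one]
            exact hle Q _ (hmem k)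
        _ = (N : ℝ) * MQ Q := by
            rw [Finset.sum_const, Finset.card_range, nsmul_eq_mul]
    exact le_of_mul_le_mul_left (by simpa using hsum) hN0
  ext x
  simp only [Set.mem_setOf_eq]
  constructor
  · intro hx d P hP
    exact hx P
  · intro hx P
    -- first: a polynomial bound with a degree factor
    have hdeg : ∀ Q : MvPolynomial (Fin (n + 1)) ℂ,
        ‖eval x Q‖ ≤ (Q.totalDegree + 1 : ℝ) * MQ Q := by
      intro Q
      have hsplit : eval x Q
          = ∑ m ∈ Finset.range (Q.totalDegree + 1), eval x (homogeneousComponent m Q) := by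
        conv_lhs => rw [← sum_homogeneousComponent Q]
        rw [map_sum]
      calc ‖eval x Q‖
          ≤ ∑ m ∈ Finset.range (Q.totalDegree + 1),
              ‖eval x (homogeneousComponent m Q)‖ := by
            rw [hsplit]; exact norm_sum_le _ _
        _ ≤ ∑ m ∈ Finset.range (Q.totalDegree + 1), MQ Q := by
            refine Finset.sum_le_sum fun m _ => ?_
            exact (hx m _ (homogeneousComponent_isHomogeneous m Q)).trans (hcomp Q m)
        _ = (Q.totalDegree + 1 : ℝ) * MQ Q := by
            rw [Finset.sum_const, Finset.card_range, nsmul_eq_mul]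
            push_cast
            ring
    -- now the power trick
    set a : ℝ := ‖eval x P‖ with hadef
    set b : ℝ := MQ P with hbdef
    set D : ℕ := P.totalDegree with hDdef
    have hpow : ∀ N : ℕ, a ^ N ≤ (((N : ℝ) * D + 1)) * b ^ N := by
      intro N
      have h1 : ‖eval x (P ^ N)‖ ≤ ((P ^ N).totalDegree + 1 : ℝ) * MQ (P ^ N) :=
        hdeg (P ^ N)
      have h2 : MQ (P ^ N) ≤ b ^ N := by
        refine Real.sSup_le ?_ (pow_nonneg (Mnn P) N)
        rintro r ⟨z, hz, rfl⟩
        simp only [map_pow, norm_pow]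
        exact pow_le_pow_left₀ (norm_nonneg _) (hle P z hz) N
      have h3 : ((P ^ N).totalDegree : ℝ) ≤ (N : ℝ) * D := by
        exact_mod_cast totalDegree_pow P N
      have h4 : ‖eval x (P ^ N)‖ = a ^ N := by simp only [map_pow, norm_pow, hadef]
      nlinarith [Mnn (P ^ N), pow_nonneg (Mnn P) N, (P ^ N).totalDegree.cast_nonneg (α := ℝ)]
    -- conclude a ≤ b by letting N → ∞
    by_contra hba
    push_neg at hba
    have hbnn : 0 ≤ b := Mnn P
    have ha : 0 < a := lt_of_le_of_lt hbnn hba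
    have hr : |b / a| < 1 := by
      rw [abs_of_nonneg (div_nonneg hbnn ha.le)]
      exact (div_lt_one ha).2 hba
    have hT : Filter.Tendsto (fun N : ℕ => ((D : ℝ) + 1) * ((N : ℝ) ^ 1 * (b / a) ^ N))
        Filter.atTop (nhds (((D : ℝ) + 1) * 0)) :=
      (tendsto_pow_const_mul_const_pow_of_abs_lt_one 1 hr).const_mul _
    rw [mul_zero] at hT
    obtain ⟨N, hN1, hN2⟩ := ((hT.eventually_lt_const one_pos).and
      (Filter.eventually_ge_atTop 1)).exists
    have hNpos : (1 : ℝ) ≤ (N : ℝ) := by exact_mod_cast hN2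
    have hb' : ((D : ℝ) + 1) * ((N : ℝ) ^ 1 * ((b / a) ^ N)) * a ^ N
        = ((D : ℝ) + 1) * (N : ℝ) * b ^ N := by
      rw [div_pow]
      field_simp
    have h5 : ((D : ℝ) + 1) * (N : ℝ) * b ^ N < a ^ N := by
      have := mul_lt_mul_of_pos_right hN1 (pow_pos ha N)
      rw [hb', one_mul] at this
      exact this
    have h6 : ((N : ℝ) * D + 1) ≤ ((D : ℝ) + 1) * N := by nlinarith
    have h7 := hpow N
    nlinarith [pow_nonneg hbnn N]
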